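/- arXiv:math/0312439 — 3 statements merged into one kernel-verified Lean document; each statement's English description precedes it below -/
import Mathlib

section
/- In the reduced HNN extension M = N ⋆_D Θ with conditional expectation E_{π(N)}^M : M → π(N), if w = u(θ₀)^{ε₀} π(n₁) u(θ₁)^{ε₁} ⋯ π(n_ℓ) u(θ_ℓ)^{ε_ℓ} is any word such that the corresponding word g = θ₀^{ε₀} θ₁^{ε₁} ⋯ θ_ℓ^{ε_ℓ} in the free group F(Θ) has nonzero word length ℓ(g) ≠ 0, then E_{π(N)}^M(w) = 0. In particular, the stable unitaries u(θ), θ ∈ Θ, form a free family of Haar unitaries with respect to the state φ ∘ E_D^N ∘ π^{-1} ∘ E_{π(N)}^M, so they generate the free group factor L(F(Θ)). -/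
/-! Strong induction on the length of the word and, for a fixed length, a left-to-right scan that
keeps a reduced prefix. At a junction `u(t)^{∓1} π(n) u(t)^{±1}` violating Britton's condition,
split `n = (n - E n) + E n`, where `E` is the conditional expectation onto `D` or `θ_t(D)`: the
first summand makes the junction reduced, and in the second `u(t)^{∓1} π(E n) u(t)^{±1} ∈ π(N)` by
(A), so that word is `π(a) w' π(c)` with `w'` shorter but with the same image in `F(Θ)`, and the
bimodule property of `E_{π(N)}^M` reduces it to `w'`. Reduced words are killed by (M). For `g ≠ 1`,
`u(g)` is the word spelled by the reduced form of `g` with all `N`-letters equal to `1`. -/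

noncomputable section

/-- A faithful conditional expectation onto a star subalgebra. -/
structure CondExp (R : Type*) [Ring R] [StarRing R] [Algebra ℂ R] [StarModule ℂ R]
    (A : StarSubalgebra ℂ R) where
  toFun : R →ₗ[ℂ] R
  mem_range : ∀ x, toFun x ∈ A
  map_of_mem : ∀ a ∈ A, toFun a = a
  bimodule : ∀ a ∈ A, ∀ b ∈ A, ∀ x, toFun (a * x * b) = a * toFun x * b
  map_star' : ∀ x, toFun (star x) = star (toFun x)
  faithful : ∀ x, toFun (star x * x) = 0 → x = 0

namespace HNN

variable {N M Θ : Type*}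

/-- `u(θ)^ε` with `ε` coded by a `Bool` (`true ↦ +1`, `false ↦ -1`). -/
def upow [Monoid M] [StarMul M] (u : Θ → M) (p : Θ × Bool) : M :=
  if p.2 then u p.1 else star (u p.1)

/-- The word `u(θ₀)^{ε₀} π(n₁) u(θ₁)^{ε₁} ⋯ π(n_ℓ) u(θ_ℓ)^{ε_ℓ}`. -/
def wordProd [Monoid M] [StarMul M] (π : N → M) (u : Θ → M)
    (hd : Θ × Bool) (tl : List (N × Θ × Bool)) : M :=
  upow u hd * (tl.map fun x => π x.1 * upow u x.2).prod

/-- Britton's condition on a single adjacent pair of letters. -/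
def StepOK (kerD : Set N) (kerT : Θ → Set N)
    (p : Θ × Bool) (x : N × Θ × Bool) : Prop :=
  p.1 = x.2.1 → p.2 ≠ x.2.2 → (if p.2 then x.1 ∈ kerT p.1 else x.1 ∈ kerD)

/-- A word is reduced iff every adjacent pair satisfies Britton's condition. -/
def ReducedTail (kerD : Set N) (kerT : Θ → Set N) :
    Θ × Bool → List (N × Θ × Bool) → Prop
  | _, [] => True
  | p, x :: xs => StepOK kerD kerT p x ∧ ReducedTail kerD kerT x.2 xs

/-- The image of a word in the free group `F(Θ)` obtained by deleting the `N`-letters. -/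
def fgLetter (p : Θ × Bool) : FreeGroup Θ :=
  if p.2 then FreeGroup.of p.1 else (FreeGroup.of p.1)⁻¹

def fgWord (hd : Θ × Bool) (tl : List (N × Θ × Bool)) : FreeGroup Θ :=
  fgLetter hd * (tl.map fun x => fgLetter x.2).prod

end HNN

open HNN in
/-- The characterization of the reduced HNN extension
`(M, E_{π(N)}^M) = (N, E_D^N) ⋆_D (Θ, {E_{θ(D)}^N})`:
the conditions (A) and (M) together with generation. -/
structure IsReducedHNN
    {N : Type*} [NormedRing N] [StarRing N] [CStarRing N] [NormedAlgebra ℂ N] [StarModule ℂ N]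
    {M : Type*} [NormedRing M] [StarRing M] [CStarRing M] [NormedAlgebra ℂ M] [StarModule ℂ M]
    {Θ : Type*}
    (D : StarSubalgebra ℂ N) (θ : Θ → (D →⋆ₐ[ℂ] N))
    (ED : CondExp N D) (Eθ : ∀ t : Θ, CondExp N (θ t).range)
    (π : N →⋆ₐ[ℂ] M) (u : Θ → M) (EM : CondExp M π.range) : Prop where
  π_injective : Function.Injective π
  θ_injective : ∀ t, Function.Injective (θ t)
  u_unitary : ∀ t, u t ∈ unitary M
  /-- Condition (A): `u(θ) π(θ(d)) u(θ)* = π(d)` for all `d ∈ D`. -/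
  condA : ∀ t (d : D), u t * π (θ t d) * star (u t) = π (d : N)
  /-- Condition (M): the conditional expectation onto `π(N)` kills every reduced word. -/
  condM : ∀ hd tl,
    ReducedTail {n | ED.toFun n = 0} (fun t => {n | (Eθ t).toFun n = 0}) hd tl →
      EM.toFun (wordProd (⇑π) u hd tl) = 0
  /-- `π(N)` and the stable unitaries generate `M`. -/
  generates :
    (StarAlgebra.adjoin ℂ (Set.range ⇑π ∪ Set.range u)).topologicalClosure = ⊤


namespace CondExp

variable {R : Type*} [Ring R] [StarRing R] [Algebra ℂ R] [StarModule ℂ R] {A : StarSubalgebra ℂ R}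
  (E : CondExp R A)

theorem map_sub_self (x : R) : E.toFun (x - E.toFun x) = 0 := by
  rw [map_sub, E.map_of_mem _ (E.mem_range x), sub_self]

theorem map_mul_mul {a b : R} (ha : a ∈ A) (hb : b ∈ A) (x : R) :
    E.toFun (a * x * b) = a * E.toFun x * b :=
  E.bimodule a ha b hb x

end CondExp

namespace HNN

variable {N M Θ F : Type*}

def lastLetter (p : Θ × Bool) : List (N × Θ × Bool) → Θ × Bool
  | [] => p
  | x :: xs => lastLetter x.2 xs

theorem lastLetter_append_singleton (p : Θ × Bool) (l : List (N × Θ × Bool))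
    (x : N × Θ × Bool) : lastLetter p (l ++ [x]) = x.2 := by
  induction l generalizing p with
  | nil => rfl
  | cons y l ih => exact ih y.2

theorem reducedTail_append (kerD : Set N) (kerT : Θ → Set N) (p : Θ × Bool)
    (l₁ l₂ : List (N × Θ × Bool)) :
    ReducedTail kerD kerT p (l₁ ++ l₂) ↔
      ReducedTail kerD kerT p l₁ ∧ ReducedTail kerD kerT (lastLetter p l₁) l₂ := by
  induction l₁ generalizing p with
  | nil => simp [ReducedTail, lastLetter]
  | cons x l₁ ih => simp [ReducedTail, lastLetter, ih, and_assoc]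

theorem fgLetter_mul_fgLetter_not (t : Θ) (b : Bool) :
    fgLetter (t, !b) * fgLetter (t, b) = 1 := by
  cases b <;> simp [fgLetter]

theorem list_prod_map_fgLetter (L : List (Θ × Bool)) :
    (L.map fgLetter).prod = FreeGroup.mk L := by
  rw [← FreeGroup.lift_of_apply (FreeGroup.mk L), FreeGroup.lift_mk]
  congr 1
  refine List.map_congr_left fun ⟨t, b⟩ _ => ?_
  cases b <;> rfl

theorem fgWord_eq_mk (hd : Θ × Bool) (tl : List (N × Θ × Bool)) :
    fgWord hd tl = FreeGroup.mk (hd :: tl.map Prod.snd) := by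
  rw [← list_prod_map_fgLetter]
  simp [fgWord, Function.comp_def]

theorem fgWord_append_cons_congr (hd : Θ × Bool) (pre post : List (N × Θ × Bool))
    (n n' : N) (q : Θ × Bool) :
    fgWord hd (pre ++ (n, q) :: post) = fgWord hd (pre ++ (n', q) :: post) := by
  simp [fgWord_eq_mk]

theorem wordProd_append_cons_add [Add N] [Semiring M] [StarMul M] [FunLike F N M]
    [AddHomClass F N M] (π : F) (u : Θ → M) (hd : Θ × Bool) (pre post : List (N × Θ × Bool))
    (k e : N) (q : Θ × Bool) :
    wordProd π u hd (pre ++ (k + e, q) :: post) =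
      wordProd π u hd (pre ++ (k, q) :: post) + wordProd π u hd (pre ++ (e, q) :: post) := by
  simp only [wordProd, List.map_append, List.map_cons, List.prod_append, List.prod_cons, map_add,
    add_mul, mul_add]

theorem wordProd_map_one [One N] [Monoid M] [StarMul M] [FunLike F N M] [OneHomClass F N M]
    (π : F) (u : Θ → M) (hd : Θ × Bool) (l : List (Θ × Bool)) :
    wordProd π u hd (l.map ((1 : N), ·)) = ((hd :: l).map (upow u)).prod := by
  simp [wordProd, Function.comp_def]

theorem coe_lift_unitary_mk [Monoid M] [StarMul M] (u : Θ → M) (hu : ∀ t, u t ∈ unitary M)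
    (L : List (Θ × Bool)) :
    ((FreeGroup.lift (fun t => (⟨u t, hu t⟩ : unitary M)) (FreeGroup.mk L) : unitary M) : M) =
      (L.map (upow u)).prod := by
  rw [FreeGroup.lift_mk, Submonoid.coe_list_prod, List.map_map]
  congr 1
  refine List.map_congr_left fun ⟨t, b⟩ _ => ?_
  cases b <;> rfl

theorem wordProd_collapse [Monoid N] [Monoid M] [StarMul M] [FunLike F N M]
    [MonoidHomClass F N M] (π : F) (u : Θ → M) {p q : Θ × Bool} {e m : N}
    (hπ : upow u p * (π e * upow u q) = π m) (hfg : fgLetter p * fgLetter q = 1)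
    (hd : Θ × Bool) (pre post : List (N × Θ × Bool)) (hlast : lastLetter hd pre = p) :
    fgWord hd (pre ++ (e, q) :: post) = 1 ∨
      ∃ (a c : N) (hd' : Θ × Bool) (tl' : List (N × Θ × Bool)),
        tl'.length < (pre ++ (e, q) :: post).length ∧
        fgWord hd' tl' = fgWord hd (pre ++ (e, q) :: post) ∧
        wordProd π u hd (pre ++ (e, q) :: post) = π a * wordProd π u hd' tl' * π c := by
  have hπ' : ∀ X, upow u p * (π e * (upow u q * X)) = π m * X := fun X => by
    rw [← hπ]; simp only [mul_assoc]
  have hfg' : ∀ X, fgLetter p * (fgLetter q * X) = X := fun X => by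
    rw [← mul_assoc, hfg, one_mul]
  rcases pre.eq_nil_or_concat with rfl | ⟨pre, ⟨a, r⟩, rfl⟩
  · obtain rfl : hd = p := hlast
    cases post with
    | nil => left; simpa [fgWord] using hfg
    | cons c post =>
      refine Or.inr ⟨m * c.1, 1, c.2, post, by simp, ?_, ?_⟩
      · simp [fgWord, hfg']
      · simp [wordProd, map_mul, mul_assoc, hπ']
  · simp only [List.concat_eq_append, lastLetter_append_singleton] at hlast ⊢
    obtain rfl : r = p := hlast
    cases post with
    | nil =>
      refine Or.inr ⟨1, a * m, hd, pre, by simp, ?_, ?_⟩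
      · simp [fgWord, hfg]
      · simp [wordProd, map_mul, mul_assoc, hπ]
    | cons c post =>
      refine Or.inr ⟨1, 1, hd, pre ++ (a * m * c.1, c.2) :: post, by simp, ?_, ?_⟩
      · simp [fgWord, mul_assoc, hfg']
      · simp [wordProd, map_mul, mul_assoc, hπ']

end HNN

namespace IsReducedHNN

open HNN

variable {N : Type*} [NormedRing N] [StarRing N] [CStarRing N] [NormedAlgebra ℂ N]
  [StarModule ℂ N] {M : Type*} [NormedRing M] [StarRing M] [CStarRing M] [NormedAlgebra ℂ M]
  [StarModule ℂ M] {Θ : Type*} {D : StarSubalgebra ℂ N} {θ : Θ → (D →⋆ₐ[ℂ] N)}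
  {ED : CondExp N D} {Eθ : ∀ t : Θ, CondExp N (θ t).range} {π : N →⋆ₐ[ℂ] M} {u : Θ → M}
  {EM : CondExp M π.range}

theorem condA_star (h : IsReducedHNN D θ ED Eθ π u EM) (t : Θ) (d : D) :
    star (u t) * (π d * u t) = π (θ t d) := by
  have hu := h.u_unitary t
  rw [← h.condA t d]
  simp only [← mul_assoc, Unitary.star_mul_self_of_mem hu, one_mul]
  simp only [mul_assoc, Unitary.star_mul_self_of_mem hu, mul_one]

theorem exists_add_stepOK_and_collapse (h : IsReducedHNN D θ ED Eθ π u EM) (n : N) (t : Θ)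
    (b : Bool) :
    ∃ k e m : N, n = k + e ∧
      StepOK {n | ED.toFun n = 0} (fun t => {n | (Eθ t).toFun n = 0}) (t, !b) (k, t, b) ∧
      upow u (t, !b) * (π e * upow u (t, b)) = π m := by
  cases b with
  | false =>
    obtain ⟨d, hd⟩ := (Eθ t).mem_range n
    refine ⟨n - (Eθ t).toFun n, (Eθ t).toFun n, d, by simp, fun _ _ => (Eθ t).map_sub_self n, ?_⟩
    rw [← hd, ← mul_assoc]
    exact h.condA t d
  | true =>
    refine ⟨n - ED.toFun n, ED.toFun n, θ t ⟨ED.toFun n, ED.mem_range n⟩, by simp,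
      fun _ _ => ED.map_sub_self n, h.condA_star t ⟨ED.toFun n, ED.mem_range n⟩⟩

theorem condExp_wordProd_append_eq_zero (h : IsReducedHNN D θ ED Eθ π u EM) {L : ℕ}
    (ih : ∀ (hd : Θ × Bool) (tl : List (N × Θ × Bool)), tl.length < L → fgWord hd tl ≠ 1 →
      EM.toFun (wordProd π u hd tl) = 0)
    (hd : Θ × Bool) (post : List (N × Θ × Bool)) :
    ∀ pre, (pre ++ post).length = L →
      ReducedTail {n | ED.toFun n = 0} (fun t => {n | (Eθ t).toFun n = 0}) hd pre →
      fgWord hd (pre ++ post) ≠ 1 → EM.toFun (wordProd π u hd (pre ++ post)) = 0 := by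
  induction post with
  | nil =>
    intro pre _ hred _
    rw [List.append_nil]
    exact h.condM hd pre hred
  | cons x post ihpost =>
    intro pre hlen hred hfg
    obtain ⟨n, t, b⟩ := x
    have extend : ∀ k : N, StepOK {n | ED.toFun n = 0} (fun t => {n | (Eθ t).toFun n = 0})
        (lastLetter hd pre) (k, t, b) →
          EM.toFun (wordProd π u hd (pre ++ (k, t, b) :: post)) = 0 :=
      fun k hstep => by
        rw [List.append_cons]
        refine ihpost _ (by simpa using hlen) ?_ ?_
        · exact (reducedTail_append _ _ _ _ _).2 ⟨hred, hstep, trivial⟩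
        · rw [← List.append_cons, fgWord_append_cons_congr _ _ _ k n]
          exact hfg
    by_cases hcancel : lastLetter hd pre = (t, !b)
    · obtain ⟨k, e, m, rfl, hstep, hcollapse⟩ := h.exists_add_stepOK_and_collapse n t b
      rw [wordProd_append_cons_add, map_add, extend k (hcancel ▸ hstep), zero_add]
      rw [fgWord_append_cons_congr _ _ _ _ e] at hfg
      obtain hfg1 | ⟨a, c, hd', tl', hshort, hfg', hword⟩ := wordProd_collapse π u hcollapse
        (fgLetter_mul_fgLetter_not t b) hd pre post hcancel
      · exact absurd hfg1 hfg
      · have hrange : ∀ x, π x ∈ π.range := fun x => ⟨x, rfl⟩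
        rw [hword, EM.map_mul_mul (hrange a) (hrange c),
          ih hd' tl' (by simpa [← hlen] using hshort) (hfg' ▸ hfg), mul_zero, zero_mul]
    · exact extend n fun heq hne => (hcancel (Prod.ext heq (Bool.eq_not_iff.2 hne))).elim

theorem condExp_wordProd_eq_zero (h : IsReducedHNN D θ ED Eθ π u EM) (hd : Θ × Bool)
    (tl : List (N × Θ × Bool)) (hfg : fgWord hd tl ≠ 1) : EM.toFun (wordProd π u hd tl) = 0 := by
  induction hL : tl.length using Nat.strong_induction_on generalizing hd tl with
  | _ L ih =>
    exact h.condExp_wordProd_append_eq_zero (fun hd' tl' hlt hfg' => ih _ hlt hd' tl' hfg' rfl)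
      hd tl [] hL trivial hfg

theorem condExp_coe_lift_eq_zero (h : IsReducedHNN D θ ED Eθ π u EM) {g : FreeGroup Θ}
    (hg : g ≠ 1) :
    EM.toFun ((FreeGroup.lift (fun t => (⟨u t, h.u_unitary t⟩ : unitary M)) g : unitary M) : M)
      = 0 := by
  classical
  obtain ⟨hd, l, hword⟩ := List.exists_cons_of_ne_nil (mt FreeGroup.toWord_eq_nil_iff.1 hg)
  have hmk : FreeGroup.mk (hd :: l) = g := hword ▸ FreeGroup.mk_toWord
  rw [← hmk, coe_lift_unitary_mk, ← wordProd_map_one π]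
  refine h.condExp_wordProd_eq_zero hd _ ?_
  simpa [fgWord_eq_mk, Function.comp_def, hmk] using hg

end IsReducedHNN

open HNN in
theorem hnn_expectation_vanishes_on_positive_length_words_general
    {N : Type*} [NormedRing N] [StarRing N] [CStarRing N] [NormedAlgebra ℂ N] [StarModule ℂ N]
    {M : Type*} [NormedRing M] [StarRing M] [CStarRing M] [NormedAlgebra ℂ M] [StarModule ℂ M]
    {Θ : Type*}
    (D : StarSubalgebra ℂ N) (θ : Θ → (D →⋆ₐ[ℂ] N))
    (ED : CondExp N D) (Eθ : ∀ t : Θ, CondExp N (θ t).range)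
    (π : N →⋆ₐ[ℂ] M) (u : Θ → M) (EM : CondExp M π.range)
    (h : IsReducedHNN D θ ED Eθ π u EM)
    -- ... and its extension `ψ = φ ∘ E_D^N ∘ π⁻¹ ∘ E_{π(N)}^M` to `M`
    (ψ : M →ₗ[ℂ] ℂ) (hψE : ∀ m, ψ (EM.toFun m) = ψ m) :
    (∀ (hd : Θ × Bool) (tl : List (N × Θ × Bool)),
      fgWord hd tl ≠ 1 → EM.toFun (wordProd (⇑π) u hd tl) = 0) ∧
    (∀ g : FreeGroup Θ, g ≠ 1 →
      ψ ((FreeGroup.lift (fun t => (⟨u t, h.u_unitary t⟩ : unitary M)) g : unitary M) : M) = 0) :=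
  ⟨h.condExp_wordProd_eq_zero, fun _ hg => by rw [← hψE, h.condExp_coe_lift_eq_zero hg, map_zero]⟩

open HNN in
/-- In the reduced HNN extension `M = N ⋆_D Θ`, any word whose image in the free
group `F(Θ)` (obtained by deleting the `N`-letters) has nonzero length is killed by
`E_{π(N)}^M`.  In particular the stable unitaries `u(θ)` form a free family of Haar unitaries
with respect to the state `φ ∘ E_D^N ∘ π⁻¹ ∘ E_{π(N)}^M` (expressed by the vanishing of the
moments `ψ(u(g))` for every `g ≠ 1` in `F(Θ)`), so that they generate the free group factor
`L(F(Θ))`. -/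
theorem hnn_expectation_vanishes_on_positive_length_words
    {N : Type*} [NormedRing N] [StarRing N] [CStarRing N] [NormedAlgebra ℂ N] [StarModule ℂ N]
    {M : Type*} [NormedRing M] [StarRing M] [CStarRing M] [NormedAlgebra ℂ M] [StarModule ℂ M]
    {Θ : Type*}
    (D : StarSubalgebra ℂ N) (θ : Θ → (D →⋆ₐ[ℂ] N))
    (ED : CondExp N D) (Eθ : ∀ t : Θ, CondExp N (θ t).range)
    (π : N →⋆ₐ[ℂ] M) (u : Θ → M) (EM : CondExp M π.range)
    (h : IsReducedHNN D θ ED Eθ π u EM)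
    -- a faithful normal state of the form `φ ∘ E_D^N` on `N` ...
    (φ : N →ₗ[ℂ] ℂ) (hφ1 : φ 1 = 1) (hφE : ∀ x, φ (ED.toFun x) = φ x)
    (hφfaithful : ∀ x, φ (star x * x) = 0 → x = 0)
    -- ... and its extension `ψ = φ ∘ E_D^N ∘ π⁻¹ ∘ E_{π(N)}^M` to `M`
    (ψ : M →ₗ[ℂ] ℂ) (hψπ : ∀ x : N, ψ (π x) = φ x) (hψE : ∀ m, ψ (EM.toFun m) = ψ m) :
    (∀ (hd : Θ × Bool) (tl : List (N × Θ × Bool)),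
      fgWord hd tl ≠ 1 → EM.toFun (wordProd (⇑π) u hd tl) = 0) ∧
    (∀ g : FreeGroup Θ, g ≠ 1 →
      ψ ((FreeGroup.lift (fun t => (⟨u t, h.u_unitary t⟩ : unitary M)) g : unitary M) : M) = 0) :=
  hnn_expectation_vanishes_on_positive_length_words_general D θ ED Eθ π u EM h ψ hψE
end
end

section
/- The conditions (A) and (M) characterize the reduced HNN extension: if P is a von Neumann algebra containing a copy of N (via a normal *-isomorphism) and unitaries v(θ), θ ∈ Θ, generating P, together with a faithful normal conditional expectation F : P → N such that v(θ)θ(d)v(θ)* = d for all d ∈ D and F(w) = 0 for every reduced word w, then the value of F on any word u(θ₀)^{δ₀} x₁ u(θ₁)^{δ₁} ⋯ x_m u(θ_m)^{δ_m} (x_i ∈ N, δ_i ∈ ℤ∖{0}) is uniquely determined by the data (θ_i, δ_i), x_i, E_D^N, and the E_{θ(D)}^N. -/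
noncomputable section

namespace HNN

/-- The word `u(θ₀)^{δ₀} π(x₁) u(θ₁)^{δ₁} ⋯ π(x_m) u(θ_m)^{δ_m}` with integer exponents. -/
def zwordProd {N M Θ : Type*} [Monoid M] [StarMul M] (π : N → M) (u : Θ → unitary M)
    (hd : Θ × ℤ) (tl : List (N × Θ × ℤ)) : M :=
  ((u hd.1 ^ hd.2 : unitary M) : M) *
    (tl.map fun x => π x.1 * ((u x.2.1 ^ x.2.2 : unitary M) : M)).prod

end HNN


/-!
Let `S` be the linear span of `π(N)` and of all `π(a) w π(b)` with `w` a reduced word. Any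
expectation `F` onto `π(N)` satisfying (M) is determined on `S`: it fixes `π(N)` and, being
`π(N)`-bimodular, kills every `π(a) w π(b)`. On the other hand `S` contains `1` and is stable
under left multiplication by `π(N)` and by `u(θ)^{±1}`, so it contains every word. Prepending
`u(θ)^ε` to `π(a) w` either keeps the word reduced, or Britton's condition fails at `a`; then
`a = (a - E a) + E a` for the relevant expectation `E`, the first summand gives a reduced word,
and in the second `u(θ)^ε π(E a) u(θ)^{-ε}` collapses into `π(N)` by (A).
-/

namespace CondExp

variable {R : Type*} [Ring R] [StarRing R] [Algebra ℂ R] [StarModule ℂ R]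
  {A : StarSubalgebra ℂ R}

theorem apply_apply (E : CondExp R A) (x : R) : E.toFun (E.toFun x) = E.toFun x :=
  E.map_of_mem _ (E.mem_range x)

theorem apply_sub_apply (E : CondExp R A) (x : R) : E.toFun (x - E.toFun x) = 0 := by
  rw [map_sub, apply_apply, sub_self]

end CondExp

theorem Submodule.mul_mem_span_of_forall_mul_mem {R A : Type*} [CommSemiring R] [Semiring A]
    [Algebra R A] {s : Set A} {m : A} (hs : ∀ x ∈ s, m * x ∈ span R s) {y : A}
    (hy : y ∈ span R s) : m * y ∈ span R s :=
  (span_le (p := (span R s).comap (LinearMap.mulLeft R m))).2 hs hy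

theorem Unitary.zpow_mul_mem_of_forall_mul_mem {M : Type*} [Monoid M] [StarMul M] {S : Set M}
    {v : unitary M} (hv : ∀ y ∈ S, (v : M) * y ∈ S) (hv' : ∀ y ∈ S, star (v : M) * y ∈ S)
    (n : ℤ) {y : M} (hy : y ∈ S) : ((v ^ n : unitary M) : M) * y ∈ S := by
  induction n using Int.induction_on generalizing y with
  | zero => simpa using hy
  | succ k ih =>
    rw [zpow_add_one, Submonoid.coe_mul, mul_assoc]
    exact ih (hv y hy)
  | pred k ih =>
    rw [zpow_sub_one, Submonoid.coe_mul, mul_assoc, ← Unitary.star_eq_inv, Unitary.coe_star]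
    exact ih (hv' y hy)

namespace HNN

variable {N M Θ : Type*}

theorem wordProd_nil [Monoid M] [StarMul M] (π : N → M) (u : Θ → M) (p : Θ × Bool) :
    wordProd π u p [] = upow u p := by
  simp [wordProd]

theorem wordProd_cons [Monoid M] [StarMul M] (π : N → M) (u : Θ → M) (p : Θ × Bool)
    (x : N × Θ × Bool) (tl : List (N × Θ × Bool)) :
    wordProd π u p (x :: tl) = upow u p * (π x.1 * wordProd π u x.2 tl) := by
  simp [wordProd, mul_assoc]

theorem snd_eq_of_not_stepOK {kerD : Set N} {kerT : Θ → Set N} {p : Θ × Bool}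
    {x : N × Θ × Bool} (h : ¬ StepOK kerD kerT p x) : x.2 = (p.1, !p.2) := by
  simp only [StepOK, Classical.not_imp] at h
  obtain ⟨h₁, h₂, -⟩ := h
  exact Prod.ext h₁.symm (Bool.eq_not_iff.2 (Ne.symm h₂))

section Algebraic

variable [Ring N] [StarRing N] [Algebra ℂ N] [StarModule ℂ N]
  [Ring M] [StarRing M] [Algebra ℂ M]
  {D : StarSubalgebra ℂ N} {θ : Θ → (D →⋆ₐ[ℂ] N)}

/-- The expectation that Britton's condition applies to the letter following `u(θ)^ε`:
`E_{θ(D)}^N` after `u(θ)`, `E_D^N` after `u(θ)*`. -/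
def letterExp (ED : CondExp N D) (Eθ : ∀ t : Θ, CondExp N (θ t).range) (p : Θ × Bool) :
    N →ₗ[ℂ] N :=
  if p.2 then (Eθ p.1).toFun else ED.toFun

variable (ED : CondExp N D) (Eθ : ∀ t : Θ, CondExp N (θ t).range) (π : N →⋆ₐ[ℂ] M) (u : Θ → M)

theorem letterExp_sub_self (p : Θ × Bool) (a : N) :
    letterExp ED Eθ p (a - letterExp ED Eθ p a) = 0 := by
  obtain ⟨t, _ | _⟩ := p <;> exact CondExp.apply_sub_apply _ a

theorem stepOK_of_letterExp_eq_zero {p : Θ × Bool} {a : N} (h : letterExp ED Eθ p a = 0)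
    (q : Θ × Bool) :
    StepOK {n | ED.toFun n = 0} (fun t => {n | (Eθ t).toFun n = 0}) p (a, q) := by
  intro _ _
  obtain ⟨t, _ | _⟩ := p <;> exact h

theorem exists_upow_mul_letterExp_mul_upow
    (hA : ∀ t (d : D), u t * π (θ t d) * star (u t) = π (d : N))
    (hu : ∀ t, u t ∈ unitary M) (p : Θ × Bool) (a : N) :
    ∃ m, upow u p * π (letterExp ED Eθ p a) * upow u (p.1, !p.2) = π m := by
  obtain ⟨t, _ | _⟩ := p
  · let d : D := ⟨ED.toFun a, ED.mem_range a⟩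
    have hu' := Unitary.star_mul_self_of_mem (hu t)
    refine ⟨θ t d, ?_⟩
    calc star (u t) * π d * u t
        = star (u t) * (u t * π (θ t d) * star (u t)) * u t := by rw [hA]
      _ = (star (u t) * u t) * π (θ t d) * (star (u t) * u t) := by simp only [mul_assoc]
      _ = π (θ t d) := by rw [hu', one_mul, mul_one]
  · obtain ⟨d, hd⟩ := (Eθ t).mem_range a
    exact ⟨d, by simp only [upow, letterExp, if_true, Bool.not_true, ← hd]; exact hA t d⟩

def reducedSpan : Submodule ℂ M :=
  Submodule.span ℂ (Set.range π ∪ {x | ∃ a hd tl b,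
    ReducedTail {n | ED.toFun n = 0} (fun t => {n | (Eθ t).toFun n = 0}) hd tl ∧
      x = π a * wordProd π u hd tl * π b})

variable {ED Eθ π u}

variable (π u) in
theorem reducedWord_mem_reducedSpan {hd : Θ × Bool} {tl : List (N × Θ × Bool)}
    (hred : ReducedTail {n | ED.toFun n = 0} (fun t => {n | (Eθ t).toFun n = 0}) hd tl)
    (a b : N) : π a * wordProd π u hd tl * π b ∈ reducedSpan ED Eθ π u :=
  Submodule.subset_span (Or.inr ⟨a, hd, tl, b, hred, rfl⟩)

variable (ED Eθ π) in
theorem pi_mem_reducedSpan (c : N) : π c ∈ reducedSpan ED Eθ π u :=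
  Submodule.subset_span (Or.inl ⟨c, rfl⟩)

variable (π u) in
theorem pi_mul_tail_mul_pi_mem_reducedSpan {hd : Θ × Bool} {tl : List (N × Θ × Bool)}
    (hred : ReducedTail {n | ED.toFun n = 0} (fun t => {n | (Eθ t).toFun n = 0}) hd tl)
    (a b : N) :
    π a * (tl.map fun x => π x.1 * upow u x.2).prod * π b ∈ reducedSpan ED Eθ π u := by
  cases tl with
  | nil => simpa [← map_mul] using pi_mem_reducedSpan (u := u) ED Eθ π (a * b)
  | cons x xs =>
    convert reducedWord_mem_reducedSpan π u hred.2 (a * x.1) b using 1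
    simp [wordProd, mul_assoc]

theorem pi_mul_mem_reducedSpan (n : N) {y : M} (hy : y ∈ reducedSpan ED Eθ π u) :
    π n * y ∈ reducedSpan ED Eθ π u := by
  refine Submodule.mul_mem_span_of_forall_mul_mem
    (fun x hx => show _ * x ∈ reducedSpan ED Eθ π u from ?_) hy
  rcases hx with ⟨c, rfl⟩ | ⟨a, hd, tl, b, hred, rfl⟩
  · simpa [← map_mul] using pi_mem_reducedSpan (u := u) ED Eθ π (n * c)
  · convert reducedWord_mem_reducedSpan π u hred (n * a) b using 1
    simp [mul_assoc]

theorem upow_mul_mem_reducedSpan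
    (hA : ∀ t (d : D), u t * π (θ t d) * star (u t) = π (d : N))
    (hu : ∀ t, u t ∈ unitary M) (p : Θ × Bool) {y : M} (hy : y ∈ reducedSpan ED Eθ π u) :
    upow u p * y ∈ reducedSpan ED Eθ π u := by
  refine Submodule.mul_mem_span_of_forall_mul_mem
    (fun x hx => show _ * x ∈ reducedSpan ED Eθ π u from ?_) hy
  rcases hx with ⟨c, rfl⟩ | ⟨a, q, tl, b, hred, rfl⟩
  · convert reducedWord_mem_reducedSpan π u (hd := p) (tl := []) trivial 1 c using 1
    simp [wordProd_nil]
  by_cases hok : StepOK {n | ED.toFun n = 0} (fun t => {n | (Eθ t).toFun n = 0}) p (a, q)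
  · convert reducedWord_mem_reducedSpan π u (tl := (a, q) :: tl) ⟨hok, hred⟩ 1 b using 1
    simp [wordProd_cons, mul_assoc]
  obtain rfl : q = (p.1, !p.2) := snd_eq_of_not_stepOK hok
  obtain ⟨m, hm⟩ := exists_upow_mul_letterExp_mul_upow ED Eθ π u hA hu p a
  set e := letterExp ED Eθ p a
  rw [← sub_add_cancel a e, map_add, add_mul, add_mul, mul_add]
  refine add_mem ?_ ?_
  · have hok' := stepOK_of_letterExp_eq_zero ED Eθ (letterExp_sub_self ED Eθ p a) (p.1, !p.2)
    convert reducedWord_mem_reducedSpan π u (tl := (a - e, (p.1, !p.2)) :: tl) ⟨hok', hred⟩ 1 b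
      using 1
    simp [wordProd_cons, mul_assoc]
  · convert pi_mul_tail_mul_pi_mem_reducedSpan π u hred m b using 1
    rw [← hm, wordProd]
    simp only [mul_assoc]

theorem zwordProd_mem_reducedSpan
    (hA : ∀ t (d : D), u t * π (θ t d) * star (u t) = π (d : N))
    (hu : ∀ t, u t ∈ unitary M) (hd : Θ × ℤ) (tl : List (N × Θ × ℤ)) :
    zwordProd π (fun t => (⟨u t, hu t⟩ : unitary M)) hd tl ∈ reducedSpan ED Eθ π u := by
  have hzpow : ∀ (t : Θ) (δ : ℤ) {y : M}, y ∈ reducedSpan ED Eθ π u →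
      (((⟨u t, hu t⟩ : unitary M) ^ δ : unitary M) : M) * y ∈ reducedSpan ED Eθ π u :=
    fun t => Unitary.zpow_mul_mem_of_forall_mul_mem
      (fun _ => upow_mul_mem_reducedSpan hA hu (t, true))
      (fun _ => upow_mul_mem_reducedSpan hA hu (t, false))
  induction tl generalizing hd with
  | nil => simpa [zwordProd] using hzpow hd.1 hd.2 (pi_mem_reducedSpan ED Eθ π 1)
  | cons x xs ih =>
    simpa [zwordProd, mul_assoc] using hzpow hd.1 hd.2 (pi_mul_mem_reducedSpan x.1 (ih x.2))

theorem condExp_eqOn_reducedSpan [StarModule ℂ M] {F₁ F₂ : CondExp M π.range}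
    (hM₁ : ∀ hd tl, ReducedTail {n | ED.toFun n = 0} (fun t => {n | (Eθ t).toFun n = 0}) hd tl →
      F₁.toFun (wordProd π u hd tl) = 0)
    (hM₂ : ∀ hd tl, ReducedTail {n | ED.toFun n = 0} (fun t => {n | (Eθ t).toFun n = 0}) hd tl →
      F₂.toFun (wordProd π u hd tl) = 0)
    {y : M} (hy : y ∈ reducedSpan ED Eθ π u) : F₁.toFun y = F₂.toFun y := by
  refine LinearMap.eqOn_span (fun x hx => ?_) hy
  rcases hx with ⟨c, rfl⟩ | ⟨a, hd, tl, b, hred, rfl⟩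
  · rw [F₁.map_of_mem (π c) ⟨c, rfl⟩, F₂.map_of_mem (π c) ⟨c, rfl⟩]
  · rw [F₁.bimodule (π a) ⟨a, rfl⟩ (π b) ⟨b, rfl⟩, F₂.bimodule (π a) ⟨a, rfl⟩ (π b) ⟨b, rfl⟩,
      hM₁ hd tl hred, hM₂ hd tl hred]

end Algebraic

end HNN

open HNN in
/-- The conditions (A) and (M) characterize the reduced HNN extension: any two
faithful (normal) conditional expectations `F₁`, `F₂` onto `π(N)` satisfying (A) and (M) (i.e.
two realizations of the reduced HNN extension on the same generators) agree on every word
`u(θ₀)^{δ₀} x₁ u(θ₁)^{δ₁} ⋯ x_m u(θ_m)^{δ_m}` with `x_i ∈ N` and `δ_i ∈ ℤ ∖ {0}`: the value of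
the conditional expectation on such a word is uniquely determined by the data `(θ_i, δ_i)`,
`x_i`, `E_D^N` and the `E_{θ(D)}^N`. -/
theorem hnn_expectation_uniquely_determined
    {N : Type*} [NormedRing N] [StarRing N] [CStarRing N] [NormedAlgebra ℂ N] [StarModule ℂ N]
    {M : Type*} [NormedRing M] [StarRing M] [CStarRing M] [NormedAlgebra ℂ M] [StarModule ℂ M]
    {Θ : Type*}
    (D : StarSubalgebra ℂ N) (θ : Θ → (D →⋆ₐ[ℂ] N))
    (ED : CondExp N D) (Eθ : ∀ t : Θ, CondExp N (θ t).range)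
    (π : N →⋆ₐ[ℂ] M) (u : Θ → M)
    (F₁ F₂ : CondExp M π.range)
    (h₁ : IsReducedHNN D θ ED Eθ π u F₁)
    (h₂ : IsReducedHNN D θ ED Eθ π u F₂) :
    ∀ (hd : Θ × ℤ) (tl : List (N × Θ × ℤ)), hd.2 ≠ 0 → (∀ x ∈ tl, x.2.2 ≠ 0) →
      F₁.toFun (zwordProd (⇑π) (fun t => (⟨u t, h₁.u_unitary t⟩ : unitary M)) hd tl) =
      F₂.toFun (zwordProd (⇑π) (fun t => (⟨u t, h₁.u_unitary t⟩ : unitary M)) hd tl) :=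
  fun hd tl _ _ => condExp_eqOn_reducedSpan h₁.condM h₂.condM
    (zwordProd_mem_reducedSpan (ED := ED) (Eθ := Eθ) h₁.condA h₁.u_unitary hd tl)
end
end

section
/- Let P = (P ⋆ S) where P is a tracial von Neumann algebra and S = L(F₂) with Haar unitary generators a, b, free product taken with respect to the traces. If {u_n}_{n∈ℤ} is a family of unitaries in P, then the unitaries u_n b^n a b*^n, n ∈ ℤ, form a *-free family of Haar unitaries in the free product P ⋆ S. -/
noncomputable section

namespace HNN

/-- Alternating words between two sets `K₁`, `K₂`, starting in `K₁` if `b = true`. -/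
def Alt {L : Type*} (K₁ K₂ : Set L) : Bool → List L → Prop
  | _, [] => True
  | b, x :: xs => (x ∈ if b then K₁ else K₂) ∧ Alt K₁ K₂ (!b) xs

end HNN


/-!
Write the letter `xₙ^{±1}` of a reduced word in `F(ℤ)` as `r λ(g) q` with `r, q ∈ P` and
`g = cₙ^{±1}`, `cₙ = bⁿ a b⁻ⁿ`. Moving the leading `P`-factor to the end by traciality, the word
becomes `λ(g₁) p₁ ⋯ λ(gₖ) pₖ` with `pᵢ ∈ P`. Splitting every `pᵢ = τ(pᵢ) + (pᵢ - τ(pᵢ))`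
expands it into alternating products of centered elements of `P` and `S`, in which adjacent
`λ`'s have merged into `λ(gᵢ ⋯ gⱼ)` for contiguous subwords. Those are `≠ 1` because the `cₙ`
freely generate: `a ↦ x₀`, `b ↦ shift` maps `F₂` to `F(ℤ) ⋊ ℤ` and sends `cₙ` to `xₙ`. Freeness
of `P` and `S` then kills every term.
-/

section Words

variable {M : Type*} [Monoid M]

def pairsProd (l : List (M × M)) : M := (l.map fun x => x.1 * x.2).prod

@[simp]
theorem pairsProd_nil : pairsProd ([] : List (M × M)) = 1 := rfl

@[simp]
theorem pairsProd_cons (x : M × M) (l : List (M × M)) :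
    pairsProd (x :: l) = x.1 * x.2 * pairsProd l := List.prod_cons

@[simp]
theorem pairsProd_append (l l' : List (M × M)) :
    pairsProd (l ++ l') = pairsProd l * pairsProd l' := by
  simp [pairsProd]

end Words

section InfixProds

variable {M : Type*} [Monoid M] {T : Set M}

def InfixProdsIn (T : Set M) (L : List M) : Prop :=
  ∀ l, l <:+: L → l ≠ [] → l.prod ∈ T

theorem InfixProdsIn.head_mem {a : M} {L : List M} (h : InfixProdsIn T (a :: L)) : a ∈ T := by
  simpa using h [a] ((List.prefix_cons_inj a).2 List.nil_prefix).isInfix (List.cons_ne_nil a [])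

theorem InfixProdsIn.of_cons {a : M} {L : List M} (h : InfixProdsIn T (a :: L)) :
    InfixProdsIn T L :=
  fun l hl => h l (List.infix_cons hl)

theorem InfixProdsIn.mul_cons {a b : M} {L : List M} (h : InfixProdsIn T (a :: b :: L)) :
    InfixProdsIn T (a * b :: L) := by
  intro l hl hne
  rcases List.infix_cons_iff.1 hl with hl | hl
  · obtain ⟨t, rfl, ht⟩ := (List.prefix_cons_iff.1 hl).resolve_left hne
    simpa [mul_assoc] using
      h (a :: b :: t) ((List.prefix_cons_inj a).2 ((List.prefix_cons_inj b).2 ht)).isInfix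
        (List.cons_ne_nil _ _)
  · exact h.of_cons.of_cons l hl hne

end InfixProds

section LinkedPairs

variable {α M : Type*} [Monoid M] (r s q : α → M)

def linkedPairs : α → List α → List (M × M)
  | z, [] => [(s z, q z)]
  | z, z' :: zs => (s z, q z * r z') :: linkedPairs z' zs

theorem prod_map_eq_mul_linkedPairs (z : α) (zs : List α) :
    ((z :: zs).map fun z => r z * s z * q z).prod =
      r z * pairsProd (linkedPairs r s q z zs) := by
  induction zs generalizing z with
  | nil => simp [linkedPairs, mul_assoc]
  | cons z' zs ih =>
    rw [List.map_cons, List.prod_cons, ih]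
    simp [linkedPairs, mul_assoc]

theorem map_fst_linkedPairs (z : α) (zs : List α) :
    (linkedPairs r s q z zs).map Prod.fst = (z :: zs).map s := by
  induction zs generalizing z with
  | nil => rfl
  | cons z' zs ih => simp [linkedPairs, ih]

theorem snd_mem_linkedPairs {C : Type*} [SetLike C M] [MulMemClass C M] {A : C}
    (hr : ∀ z, r z ∈ A) (hq : ∀ z, q z ∈ A) (z : α) (zs : List α) :
    ∀ x ∈ linkedPairs r s q z zs, x.2 ∈ A := by
  induction zs generalizing z with
  | nil => simpa [linkedPairs] using hq z
  | cons z' zs ih => exact List.forall_mem_cons.2 ⟨mul_mem (hq z) (hr z'), ih z'⟩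

theorem linkedPairs_ne_nil (z : α) (zs : List α) : linkedPairs r s q z zs ≠ [] := by
  cases zs <;> simp [linkedPairs]

end LinkedPairs

namespace FreeProbability

variable {Q : Type*} [Ring Q] [Algebra ℂ Q] (τ : Q →ₗ[ℂ] ℂ)

def centered (K : Set Q) : Set Q := {x | x ∈ K ∧ τ x = 0}

def AreFree (K₁ K₂ : Set Q) : Prop :=
  ∀ (b : Bool) (l : List Q), l ≠ [] → HNN.Alt (centered τ K₁) (centered τ K₂) b l → τ l.prod = 0

theorem alt_false_flatMap_append {α : Type*} {K₁ K₂ : Set α} (pref : List (α × α))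
    {rest : List α} (hpref : ∀ x ∈ pref, x.1 ∈ K₂ ∧ x.2 ∈ K₁) (hrest : HNN.Alt K₁ K₂ false rest) :
    HNN.Alt K₁ K₂ false (pref.flatMap (fun x => [x.1, x.2]) ++ rest) := by
  induction pref with
  | nil => exact hrest
  | cons x pref ih =>
    have hx := hpref x List.mem_cons_self
    exact ⟨hx.1, hx.2, ih fun y hy => hpref y (List.mem_cons_of_mem x hy)⟩

theorem trace_mul_mul_eq_add (x a y : Q) :
    τ (x * a * y) = τ a * τ (x * y) + τ (x * (a - τ a • 1) * y) := by
  simp only [mul_sub, sub_mul, mul_smul_comm, smul_mul_assoc, mul_one, map_sub, map_smul,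
    smul_eq_mul]
  ring

variable {τ} (A : Subalgebra ℂ Q) (S : Set Q)

theorem sub_trace_smul_one_mem_centered (hτ1 : τ 1 = 1) {a : Q} (ha : a ∈ A) :
    a - τ a • 1 ∈ centered τ A :=
  ⟨A.sub_mem ha (A.smul_mem A.one_mem _), by simp [hτ1]⟩

theorem trace_pairsProd_mul_prod_eq_zero (hfree : AreFree τ A S) {pref : List (Q × Q)}
    (hpref : ∀ x ∈ pref, x.1 ∈ centered τ S ∧ x.2 ∈ centered τ A) {rest : List Q}
    (hne : rest ≠ []) (hrest : HNN.Alt (centered τ A) (centered τ S) false rest) :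
    τ (pairsProd pref * rest.prod) = 0 := by
  have := hfree false _ (by simp [hne]) (alt_false_flatMap_append pref hpref hrest)
  simpa [pairsProd, List.prod_append, List.flatMap_def, List.prod_flatten, Function.comp_def]
    using this

theorem trace_pairsProd_mul_mul_eq_zero (hτ1 : τ 1 = 1) (hfree : AreFree τ A S)
    {pref : List (Q × Q)} (hpref : ∀ x ∈ pref, x.1 ∈ centered τ S ∧ x.2 ∈ centered τ A)
    {s a : Q} (hs : s ∈ centered τ S) (ha : a ∈ A) :
    τ (pairsProd pref * s * a) = 0 := by
  have hsa := trace_pairsProd_mul_prod_eq_zero A S hfree hpref (rest := [s, a - τ a • 1])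
    (by simp) ⟨hs, sub_trace_smul_one_mem_centered A hτ1 ha, trivial⟩
  have hs := trace_pairsProd_mul_prod_eq_zero A S hfree hpref (rest := [s]) (by simp) ⟨hs, trivial⟩
  simp only [List.prod_cons, List.prod_nil, mul_one] at hsa hs
  rw [← mul_one (_ * s * a), trace_mul_mul_eq_add, mul_one, mul_one, mul_assoc, hs, hsa, mul_zero,
    add_zero]

theorem trace_pairsProd_append_mul_eq_zero (hτ1 : τ 1 = 1) (hfree : AreFree τ A S) {e : Q}
    (he : e ∈ A) (tl pref : List (Q × Q)) (s p : Q)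
    (hpref : ∀ x ∈ pref, x.1 ∈ centered τ S ∧ x.2 ∈ centered τ A) (hp : p ∈ A)
    (htl : ∀ x ∈ tl, x.2 ∈ A) (hS : InfixProdsIn (centered τ S) (s :: tl.map Prod.fst)) :
    τ (pairsProd (pref ++ (s, p) :: tl) * e) = 0 := by
  induction tl generalizing pref s p with
  | nil =>
    simpa [mul_assoc] using trace_pairsProd_mul_mul_eq_zero A S hτ1 hfree hpref hS.head_mem
      (A.mul_mem hp he)
  | cons x tl ih =>
    obtain ⟨s', p'⟩ := x
    set X := pairsProd tl * e
    have hp' : p' ∈ A := htl _ List.mem_cons_self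
    have htl' : ∀ x ∈ tl, x.2 ∈ A := fun x hx => htl x (List.mem_cons_of_mem _ hx)
    have hmerged : τ (pairsProd pref * (s * s') * (p' * X)) = 0 := by
      simpa [mul_assoc] using ih pref (s * s') p' hpref hp' htl' hS.mul_cons
    have hsplit : τ (pairsProd pref * s * (p - τ p • 1) * (s' * p' * X)) = 0 := by
      have hpref' : ∀ x ∈ pref ++ [(s, p - τ p • 1)],
          x.1 ∈ centered τ S ∧ x.2 ∈ centered τ A := by
        intro x hx
        rcases List.mem_append.1 hx with hx | hx
        · exact hpref x hx
        · rw [List.mem_singleton.1 hx]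
          exact ⟨hS.head_mem, sub_trace_smul_one_mem_centered A hτ1 hp⟩
      simpa [mul_assoc] using ih (pref ++ [(s, p - τ p • 1)]) s' p' hpref' hp' htl' hS.of_cons
    calc τ (pairsProd (pref ++ (s, p) :: (s', p') :: tl) * e)
        = τ (pairsProd pref * s * p * (s' * p' * X)) := by
          simp [X, mul_assoc]
      _ = τ p * τ (pairsProd pref * (s * s') * (p' * X)) +
            τ (pairsProd pref * s * (p - τ p • 1) * (s' * p' * X)) := by
          rw [trace_mul_mul_eq_add]
          simp only [mul_assoc]
      _ = 0 := by rw [hmerged, hsplit, mul_zero, add_zero]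

theorem trace_mul_pairsProd_eq_zero (hτ1 : τ 1 = 1) (hτtr : ∀ x y, τ (x * y) = τ (y * x))
    (hfree : AreFree τ A S) {r : Q} (hr : r ∈ A) {w : List (Q × Q)} (hw : w ≠ [])
    (hA : ∀ x ∈ w, x.2 ∈ A) (hS : InfixProdsIn (centered τ S) (w.map Prod.fst)) :
    τ (r * pairsProd w) = 0 := by
  obtain ⟨⟨s, p⟩, tl, rfl⟩ := List.exists_cons_of_ne_nil hw
  rw [hτtr]
  exact trace_pairsProd_append_mul_eq_zero A S hτ1 hfree hr tl [] s p (by simp)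
    (hA _ List.mem_cons_self) (fun x hx => hA x (List.mem_cons_of_mem _ hx)) hS

end FreeProbability

namespace FreeGroup

theorem mk_ne_one_of_isReduced {α : Type*} {L : List (α × Bool)} (hL : IsReduced L)
    (hne : L ≠ []) : mk L ≠ 1 := by
  classical
  intro h
  apply hne
  rw [← hL.reduce_eq, ← toWord_mk, h, toWord_one]

def conjGen (n : ℤ) : FreeGroup (Fin 2) := of 1 ^ n * of 0 * of 1 ^ (-n)

theorem map_conjGen {G : Type*} [Group G] (f : FreeGroup (Fin 2) →* G) (n : ℤ) :
    f (conjGen n) = f (of 1) ^ n * f (of 0) * f (of 1) ^ (-n) := by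
  simp [conjGen]

def shiftAction : Multiplicative ℤ →* MulAut (FreeGroup ℤ) where
  toFun k := freeGroupCongr (Equiv.addRight k.toAdd)
  map_one' := MulEquiv.toMonoidHom_injective <| ext_hom _ _ fun n => by simp
  map_mul' k l := MulEquiv.toMonoidHom_injective <| ext_hom _ _ fun n => by
    simp only [MulEquiv.coe_toMonoidHom, MulAut.mul_apply, freeGroupCongr_apply, map.of,
      Equiv.coe_addRight, toAdd_mul]
    ac_rfl

theorem lift_conjGen_injective : Function.Injective (lift conjGen) := by
  let ψ : FreeGroup (Fin 2) →* FreeGroup ℤ ⋊[shiftAction] Multiplicative ℤ :=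
    lift ![SemidirectProduct.inl (of 0), SemidirectProduct.inr (Multiplicative.ofAdd 1)]
  have hψ : ψ.comp (lift conjGen) = SemidirectProduct.inl := by
    refine ext_hom _ _ fun n => ?_
    simp only [ψ, MonoidHom.comp_apply, lift_apply_of, map_conjGen, Matrix.cons_val_one,
      Matrix.cons_val_fin_one, Matrix.cons_val_zero, zpow_neg]
    rw [← _root_.map_zpow, ← _root_.map_inv, ← SemidirectProduct.inl_aut]
    simp [shiftAction]
  refine .of_comp (f := ψ) ?_
  rw [← MonoidHom.coe_comp, hψ]
  exact SemidirectProduct.inl_injective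

end FreeGroup

namespace PerturbedConjugate

open FreeGroup FreeProbability

section Letters

variable {Q : Type*} [Monoid Q] [StarMul Q] (lam : FreeGroup (Fin 2) →* unitary Q)
  (u : ℤ → unitary Q)

/- The letter `(n, true)` of a word in `F(ℤ)` stands for `uₙ λ(cₙ)` and `(n, false)` for
`λ(cₙ)⁻¹ uₙ*`; each is `leftFactor * middleFactor * rightFactor`. -/
def leftFactor (z : ℤ × Bool) : Q := if z.2 then (u z.1 : Q) else 1

def middleFactor (z : ℤ × Bool) : Q := (lam (lift conjGen (mk [z])) : Q)

def rightFactor (z : ℤ × Bool) : Q := if z.2 then 1 else star (u z.1 : Q)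

theorem prod_map_middleFactor (l : List (ℤ × Bool)) :
    (l.map (middleFactor lam)).prod = (lam (lift conjGen (mk l)) : Q) := by
  rw [lift_mk, map_list_prod, Submonoid.coe_list_prod, List.map_map, List.map_map]
  refine congrArg List.prod (List.map_congr_left fun z _ => ?_)
  simp [middleFactor, lift_mk]

theorem coe_lift_mk_eq_prod (w : List (ℤ × Bool)) :
    ((lift (fun n => u n * lam (conjGen n)) (mk w) : unitary Q) : Q) =
      (w.map fun z => leftFactor u z * middleFactor lam z * rightFactor u z).prod := by
  rw [lift_mk, Submonoid.coe_list_prod, List.map_map]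
  refine congrArg List.prod (List.map_congr_left fun ⟨n, b⟩ _ => ?_)
  cases b <;> simp [leftFactor, middleFactor, rightFactor, lift_mk, ← Unitary.star_eq_inv]

theorem leftFactor_mem {C : Type*} [SetLike C Q] [OneMemClass C Q] {A : C}
    (hu : ∀ n, (u n : Q) ∈ A) (z : ℤ × Bool) : leftFactor u z ∈ A := by
  unfold leftFactor
  split
  · exact hu z.1
  · exact one_mem A

theorem rightFactor_mem {C : Type*} [SetLike C Q] [OneMemClass C Q] {A : C}
    (hu : ∀ n, star (u n : Q) ∈ A) (z : ℤ × Bool) : rightFactor u z ∈ A := by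
  unfold rightFactor
  split
  · exact one_mem A
  · exact hu z.1

end Letters

theorem infixProdsIn_map_middleFactor {Q : Type*} [Ring Q] [StarRing Q] [Algebra ℂ Q]
    {τ : Q →ₗ[ℂ] ℂ} {S : Set Q} {lam : FreeGroup (Fin 2) →* unitary Q}
    (hlamS : ∀ g, (lam g : Q) ∈ S) (hτlam : ∀ g, g ≠ 1 → τ (lam g : Q) = 0) (h : FreeGroup ℤ) :
    InfixProdsIn (centered τ S) (h.toWord.map (middleFactor lam)) := by
  intro l' hl' hne
  obtain ⟨l, hl, rfl⟩ := List.infix_map_iff.1 hl'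
  rw [prod_map_middleFactor]
  refine ⟨hlamS _, hτlam _ fun h1 => ?_⟩
  exact mk_ne_one_of_isReduced (isReduced_toWord.infix hl) (by simpa using hne)
    ((map_eq_one_iff _ lift_conjGen_injective).1 h1)

end PerturbedConjugate

open HNN FreeProbability FreeGroup PerturbedConjugate in
theorem perturbed_conjugates_form_free_haar_family_in_free_product_general
    {Q : Type*} [NormedRing Q] [StarRing Q] [CStarRing Q] [NormedAlgebra ℂ Q] [StarModule ℂ Q]
    {P : Type*} [NormedRing P] [StarRing P] [NormedAlgebra ℂ P]
    (jP : P →⋆ₐ[ℂ] Q)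
    (lam : FreeGroup (Fin 2) →* unitary Q)
    (τ : Q →ₗ[ℂ] ℂ)
    (hτ1 : τ 1 = 1) (hτtr : ∀ x y, τ (x * y) = τ (y * x))
    -- `S` is generated by the `*`-free Haar unitaries `a`, `b`
    (S : StarSubalgebra ℂ Q)
    (hS : S = (StarAlgebra.adjoin ℂ
      (Set.range fun g : FreeGroup (Fin 2) => (lam g : Q))).topologicalClosure)
    (hτfreeS : ∀ g : FreeGroup (Fin 2), g ≠ 1 → τ (lam g : Q) = 0)
    -- freeness of the two components `jP(P)` and `S` with respect to `τ`
    (hfree : ∀ (b : Bool) (l : List Q), l ≠ [] →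
      Alt {x | x ∈ Set.range ⇑jP ∧ τ x = 0} {x | x ∈ S ∧ τ x = 0} b l →
      τ l.prod = 0)
    -- the unitaries `u_n` coming from `P`
    (u : ℤ → unitary Q) (hu : ∀ n : ℤ, ((u n : Q)) ∈ Set.range ⇑jP) :
    ∀ h : FreeGroup ℤ, h ≠ 1 →
      τ ((FreeGroup.lift (fun n : ℤ =>
        u n * (lam (FreeGroup.of 1) ^ n * lam (FreeGroup.of 0) * lam (FreeGroup.of 1) ^ (-n))) h
          : unitary Q) : Q) = 0 := by
  intro h hne
  let A : Subalgebra ℂ Q := jP.range.toSubalgebra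
  have huA : ∀ n, (u n : Q) ∈ A := hu
  have hstarA : ∀ n, star (u n : Q) ∈ A := fun n => star_mem (s := jP.range) (hu n)
  have hlamS : ∀ g, (lam g : Q) ∈ S := fun g => by
    rw [hS]
    exact StarSubalgebra.le_topologicalClosure _ (StarAlgebra.subset_adjoin ℂ _ ⟨g, rfl⟩)
  obtain ⟨z, zs, hw⟩ := List.exists_cons_of_ne_nil (mt toWord_eq_nil_iff.1 hne)
  simp only [← map_conjGen]
  rw [← mk_toWord (x := h), coe_lift_mk_eq_prod, hw, prod_map_eq_mul_linkedPairs]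
  refine trace_mul_pairsProd_eq_zero A S hτ1 hτtr hfree (leftFactor_mem u huA z)
    (linkedPairs_ne_nil _ _ _ _ _) (snd_mem_linkedPairs _ _ _ (leftFactor_mem u huA)
      (rightFactor_mem u hstarA) _ _) ?_
  rw [map_fst_linkedPairs, ← hw]
  exact infixProdsIn_map_middleFactor hlamS hτfreeS h

open HNN in
/-- In the tracial free product `Q = P ⋆ S`, where `S = L(F₂)` has free Haar
unitary generators `a = λ(of 0)`, `b = λ(of 1)` (freeness of the two components is expressed by
the vanishing of the trace on alternating words in the trace-kernels), for any family of
unitaries `u_n`, `n ∈ ℤ`, coming from `P`, the unitaries `u_n bⁿ a b*ⁿ`, `n ∈ ℤ`, form a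
`*`-free family of Haar unitaries in `P ⋆ S`. -/
theorem perturbed_conjugates_form_free_haar_family_in_free_product
    {Q : Type*} [NormedRing Q] [StarRing Q] [CStarRing Q] [NormedAlgebra ℂ Q] [StarModule ℂ Q]
    {P : Type*} [NormedRing P] [StarRing P] [CStarRing P] [NormedAlgebra ℂ P] [StarModule ℂ P]
    (jP : P →⋆ₐ[ℂ] Q) (hjP : Function.Injective jP)
    (lam : FreeGroup (Fin 2) →* unitary Q)
    (τ : Q →ₗ[ℂ] ℂ)
    (hτ1 : τ 1 = 1) (hτtr : ∀ x y, τ (x * y) = τ (y * x))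
    (hτpos : ∀ x, 0 ≤ (τ (star x * x)).re ∧ (τ (star x * x)).im = 0)
    (hτfaithful : ∀ x, τ (star x * x) = 0 → x = 0)
    -- `S` is generated by the `*`-free Haar unitaries `a`, `b`
    (S : StarSubalgebra ℂ Q)
    (hS : S = (StarAlgebra.adjoin ℂ
      (Set.range fun g : FreeGroup (Fin 2) => (lam g : Q))).topologicalClosure)
    (hτfreeS : ∀ g : FreeGroup (Fin 2), g ≠ 1 → τ (lam g : Q) = 0)
    -- freeness of the two components `jP(P)` and `S` with respect to `τ`
    (hfree : ∀ (b : Bool) (l : List Q), l ≠ [] →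
      Alt {x | x ∈ Set.range ⇑jP ∧ τ x = 0} {x | x ∈ S ∧ τ x = 0} b l →
      τ l.prod = 0)
    -- generation: `Q = P ⋆ S`
    (hgen : (StarAlgebra.adjoin ℂ
      (Set.range ⇑jP ∪ (S : Set Q))).topologicalClosure = ⊤)
    -- the unitaries `u_n` coming from `P`
    (u : ℤ → unitary Q) (hu : ∀ n : ℤ, ((u n : Q)) ∈ Set.range ⇑jP) :
    ∀ h : FreeGroup ℤ, h ≠ 1 →
      τ ((FreeGroup.lift (fun n : ℤ =>
        u n * (lam (FreeGroup.of 1) ^ n * lam (FreeGroup.of 0) * lam (FreeGroup.of 1) ^ (-n))) h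
          : unitary Q) : Q) = 0 :=
  perturbed_conjugates_form_free_haar_family_in_free_product_general jP lam τ hτ1 hτtr S hS hτfreeS
    hfree u hu
end
end
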